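/- arXiv:1603.04981 — 2 statements merged into one kernel-verified Lean document; each statement's English description precedes it below -/
import Mathlib

section
/- Let (V_n)_{n∈ℕ} be a sequence in 𝓕 such that sup_{m,k > n} d(V_m, V_k) → 0 as n → ∞. Then there exists a unique V ∈ 𝓕 such that d(V_n, V) → 0. -/
/-- The upset of `A` within `[0,1]^K`: points of `[0,1]^K` dominating some point of `A`. -/
def upset (K : ℕ) (A : Set (Fin K → ℝ)) : Set (Fin K → ℝ) :=
  {x | x ∈ Set.Icc (0 : Fin K → ℝ) 1 ∧ ∃ y ∈ A, y ≤ x}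

/-- Membership in the space `𝓕`: a nonempty Pareto frontier in `[0,1]^K`
(no element dominates a different element) whose upset is closed and convex. -/
def memF (K : ℕ) (V : Set (Fin K → ℝ)) : Prop :=
  V.Nonempty ∧ V ⊆ Set.Icc (0 : Fin K → ℝ) 1 ∧
    (∀ u ∈ V, ∀ v ∈ V, u ≤ v → u = v) ∧
    IsClosed (upset K V) ∧ Convex ℝ (upset K V)

/-- The metric `d` on `𝓕`: Hausdorff distance (for the ℓ∞ norm) between upsets. -/
noncomputable def dF (K : ℕ) (U V : Set (Fin K → ℝ)) : ℝ :=
  Metric.hausdorffDist (upset K U) (upset K V)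

-- aux lemmas
lemma subset_upset {K : ℕ} {V : Set (Fin K → ℝ)} (h : V ⊆ Set.Icc 0 1) :
    V ⊆ upset K V := fun v hv => ⟨h hv, v, hv, le_rfl⟩

lemma upset_nonempty {K : ℕ} {V : Set (Fin K → ℝ)} (h : memF K V) :
    (upset K V).Nonempty := h.1.mono (subset_upset h.2.1)

lemma upset_subset_Icc {K : ℕ} (V : Set (Fin K → ℝ)) :
    upset K V ⊆ Set.Icc (0 : Fin K → ℝ) 1 := fun _ hx => hx.1

lemma upset_bounded {K : ℕ} (V : Set (Fin K → ℝ)) :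
    Bornology.IsBounded (upset K V) :=
  ((isCompact_Icc (a := (0 : Fin K → ℝ)) (b := 1)).isBounded).subset (upset_subset_Icc V)

lemma exists_minimal_le {K : ℕ} {S : Set (Fin K → ℝ)} (hS : IsCompact S)
    {x : Fin K → ℝ} (hx : x ∈ S) :
    ∃ m ∈ S, m ≤ x ∧ ∀ z ∈ S, z ≤ m → z = m := by
  have hT : IsCompact (S ∩ Set.Iic x) := hS.inter_right isClosed_Iic
  have hTne : (S ∩ Set.Iic x).Nonempty := ⟨x, hx, Set.mem_Iic.2 le_rfl⟩
  have hcont : Continuous (fun y : Fin K → ℝ => ∑ i, y i) := by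
    exact continuous_finset_sum _ fun i _ => continuous_apply i
  obtain ⟨m, hmT, hmin⟩ := hT.exists_isMinOn hTne hcont.continuousOn
  refine ⟨m, hmT.1, hmT.2, fun z hz hzm => ?_⟩
  by_contra hne
  have hlt : ∑ i, z i < ∑ i, m i := by
    obtain ⟨i, hi⟩ : ∃ i, z i ≠ m i := by
      by_contra h; push_neg at h; exact hne (funext h)
    exact Finset.sum_lt_sum (fun i _ => hzm i) ⟨i, Finset.mem_univ i, lt_of_le_of_ne (hzm i) hi⟩
  exact absurd (hmin ⟨hz, le_trans hzm hmT.2⟩) (not_le.mpr hlt)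

lemma memF_eq_minimal {K : ℕ} {V : Set (Fin K → ℝ)} (h : memF K V) :
    V = {x ∈ upset K V | ∀ y ∈ upset K V, y ≤ x → y = x} := by
  ext v
  constructor
  · intro hv
    refine ⟨subset_upset h.2.1 hv, fun y hy hyv => ?_⟩
    obtain ⟨-, w, hw, hwy⟩ := hy
    have : w = v := h.2.2.1 w hw v hv (hwy.trans hyv)
    exact le_antisymm hyv (this ▸ hwy)
  · rintro ⟨⟨hI, y, hy, hyx⟩, hmin⟩
    have : y = v := hmin y (subset_upset h.2.1 hy) hyx
    exact this ▸ hy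


/-- a Cauchy sequence in `(𝓕, d)` has a unique limit in `𝓕`. -/
theorem exists_unique_limit_of_cauchy {K : ℕ} (Vseq : ℕ → Set (Fin K → ℝ))
    (hmem : ∀ n, memF K (Vseq n))
    (hcauchy : ∀ ε : ℝ, 0 < ε → ∃ N : ℕ, ∀ m k : ℕ, N < m → N < k →
      dF K (Vseq m) (Vseq k) < ε) :
    ∃! V : Set (Fin K → ℝ), memF K V ∧
      Filter.Tendsto (fun n => dF K (Vseq n) V) Filter.atTop (nhds 0) := by
  classical
  -- package upsets as nonempty compacts
  have hcompact : ∀ n, IsCompact (upset K (Vseq n)) := fun n =>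
    (isCompact_Icc (a := (0 : Fin K → ℝ)) (b := 1)).of_isClosed_subset
      (hmem n).2.2.2.1 (upset_subset_Icc _)
  set s : ℕ → TopologicalSpace.NonemptyCompacts (Fin K → ℝ) :=
    fun n => ⟨⟨upset K (Vseq n), hcompact n⟩, upset_nonempty (hmem n)⟩ with hs
  have hCauchy : CauchySeq s := by
    rw [Metric.cauchySeq_iff]
    intro ε hε
    obtain ⟨N, hN⟩ := hcauchy ε hε
    exact ⟨N + 1, fun m hm k hk => by
      simpa [s, Metric.NonemptyCompacts.dist_eq, dF] using hN m k (Nat.lt_of_succ_le hm) (Nat.lt_of_succ_le hk)⟩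
  obtain ⟨L, hL⟩ := cauchySeq_tendsto_of_complete hCauchy
  set S : Set (Fin K → ℝ) := (L : Set (Fin K → ℝ)) with hSdef
  have hScompact : IsCompact S := L.toCompacts.isCompact'
  have hSclosed : IsClosed S := hScompact.isClosed
  have hSne : S.Nonempty := L.nonempty
  have hdist : Filter.Tendsto (fun n => Metric.hausdorffDist (upset K (Vseq n)) S)
      Filter.atTop (nhds 0) := by
    have := (tendsto_iff_dist_tendsto_zero).1 hL
    simpa [s, Metric.NonemptyCompacts.dist_eq] using this
  -- edist finiteness
  have hfin : ∀ n, EMetric.hausdorffEdist S (upset K (Vseq n)) ≠ ⊤ := fun n =>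
    Metric.hausdorffEdist_ne_top_of_nonempty_of_bounded hSne (upset_nonempty (hmem n))
      hScompact.isBounded (upset_bounded _)
  -- key approx: for x ∈ S, find nearby point in upset n
  have happrox : ∀ x ∈ S, ∀ n, ∃ p ∈ upset K (Vseq n),
      dist x p ≤ Metric.hausdorffDist (upset K (Vseq n)) S := by
    intro x hx n
    obtain ⟨p, hp, hpd⟩ := (hcompact n).exists_infDist_eq_dist (upset_nonempty (hmem n)) x
    refine ⟨p, hp, ?_⟩
    rw [← hpd, ← Metric.hausdorffDist_comm]
    exact Metric.infDist_le_hausdorffDist_of_mem hx (hfin n)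
  -- membership helper
  have hmemclosed : ∀ (T : Set (Fin K → ℝ)), IsClosed T →
      ∀ z : Fin K → ℝ, (∀ ε : ℝ, 0 < ε → ∃ p ∈ T, dist z p < ε) → z ∈ T := by
    intro T hT z hz
    rw [← hT.closure_eq]
    exact Metric.mem_closure_iff.2 hz
  -- S ⊆ Icc
  have hSIcc : S ⊆ Set.Icc (0 : Fin K → ℝ) 1 := by
    intro x hx
    refine hmemclosed _ isClosed_Icc x fun ε hε => ?_
    obtain ⟨n, hn⟩ := (hdist.eventually (gt_mem_nhds hε)).exists
    obtain ⟨p, hp, hpd⟩ := happrox x hx n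
    exact ⟨p, (upset_subset_Icc _) hp, hpd.trans_lt (by simpa using hn)⟩
  -- S is upward closed within Icc
  have hSup : ∀ x ∈ S, ∀ z ∈ Set.Icc (0 : Fin K → ℝ) 1, x ≤ z → z ∈ S := by
    intro x hx z hzI hxz
    refine hmemclosed _ hSclosed z fun ε hε => ?_
    obtain ⟨n, hn⟩ := (hdist.eventually (gt_mem_nhds (by linarith : (0:ℝ) < ε / 2))).exists
    have hn' : Metric.hausdorffDist (upset K (Vseq n)) S < ε / 2 := by simpa using hn
    obtain ⟨p, hp, hpd⟩ := happrox x hx n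
    -- q = p ⊔ z ∈ upset n, dist z q ≤ dist x p
    set q : Fin K → ℝ := p ⊔ z with hq
    have hqI : q ∈ Set.Icc (0 : Fin K → ℝ) 1 :=
      ⟨le_sup_of_le_right hzI.1, sup_le ((upset_subset_Icc _ hp)).2 hzI.2⟩
    have hqmem : q ∈ upset K (Vseq n) := by
      obtain ⟨-, y, hy, hyp⟩ := hp
      exact ⟨hqI, y, hy, hyp.trans le_sup_left⟩
    have hdq : dist z q ≤ dist x p := by
      rw [dist_pi_le_iff dist_nonneg]
      intro i
      have h1 : dist (z i) (q i) = |max (p i) (z i) - z i| := by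
        rw [Real.dist_eq, abs_sub_comm]; rfl
      rw [h1]
      rcases le_total (p i) (z i) with h | h
      · simp [max_eq_right h, dist_nonneg]
      · rw [max_eq_left h, abs_of_nonneg (by linarith)]
        calc p i - z i ≤ p i - x i := by linarith [hxz i]
        _ ≤ |p i - x i| := le_abs_self _
        _ = dist (x i) (p i) := by rw [Real.dist_eq, abs_sub_comm]
        _ ≤ dist x p := dist_le_pi_dist x p i
    -- back to S
    obtain ⟨r, hr, hrd⟩ : ∃ r ∈ S, dist q r ≤ Metric.hausdorffDist (upset K (Vseq n)) S := by
      obtain ⟨r, hr, hrd⟩ := hScompact.exists_infDist_eq_dist hSne q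
      refine ⟨r, hr, ?_⟩
      rw [← hrd]
      exact Metric.infDist_le_hausdorffDist_of_mem hqmem (Metric.hausdorffEdist_ne_top_of_nonempty_of_bounded (upset_nonempty (hmem n)) hSne (upset_bounded _) hScompact.isBounded)
    refine ⟨r, hr, ?_⟩
    calc dist z r ≤ dist z q + dist q r := dist_triangle _ _ _
      _ ≤ dist x p + Metric.hausdorffDist (upset K (Vseq n)) S := add_le_add hdq hrd
      _ < ε / 2 + ε / 2 := add_lt_add_of_le_of_lt (hpd.trans hn'.le) hn'
      _ = ε := by ring
  -- S convex
  have hSconv : Convex ℝ S := by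
    intro x hx y hy a b ha hb hab
    refine hmemclosed _ hSclosed _ fun ε hε => ?_
    obtain ⟨n, hn⟩ := (hdist.eventually (gt_mem_nhds (by linarith : (0:ℝ) < ε / 2))).exists
    have hn' : Metric.hausdorffDist (upset K (Vseq n)) S < ε / 2 := by simpa using hn
    obtain ⟨p, hp, hpd⟩ := happrox x hx n
    obtain ⟨r, hr, hrd⟩ := happrox y hy n
    have hc : a • p + b • r ∈ upset K (Vseq n) := (hmem n).2.2.2.2 hp hr ha hb hab
    obtain ⟨w, hw, hwd⟩ : ∃ w ∈ S, dist (a • p + b • r) w ≤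
        Metric.hausdorffDist (upset K (Vseq n)) S := by
      obtain ⟨w, hw, hwd⟩ := hScompact.exists_infDist_eq_dist hSne (a • p + b • r)
      refine ⟨w, hw, ?_⟩
      rw [← hwd]
      exact Metric.infDist_le_hausdorffDist_of_mem hc
        (by rw [EMetric.hausdorffEdist_comm]; exact hfin n)
    refine ⟨w, hw, lt_of_le_of_lt (dist_triangle _ (a • p + b • r) _) ?_⟩
    have : dist (a • x + b • y) (a • p + b • r) ≤ a * dist x p + b * dist y r := by
      rw [dist_eq_norm]
      have : a • x + b • y - (a • p + b • r) = a • (x - p) + b • (y - r) := by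
        module
      rw [this]
      calc ‖a • (x - p) + b • (y - r)‖ ≤ ‖a • (x - p)‖ + ‖b • (y - r)‖ := norm_add_le _ _
        _ = a * ‖x - p‖ + b * ‖y - r‖ := by
            rw [norm_smul, norm_smul, Real.norm_of_nonneg ha, Real.norm_of_nonneg hb]
        _ = a * dist x p + b * dist y r := by rw [dist_eq_norm, dist_eq_norm]
    have hb2 : a * dist x p + b * dist y r ≤ ε / 2 := by
      calc a * dist x p + b * dist y r
          ≤ a * (ε / 2) + b * (ε / 2) := by
            apply add_le_add (mul_le_mul_of_nonneg_left (hpd.trans hn'.le) ha)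
              (mul_le_mul_of_nonneg_left (hrd.trans hn'.le) hb)
        _ = ε / 2 := by rw [← add_mul, hab, one_mul]
    have := this.trans hb2
    linarith [hwd.trans_lt hn']
  -- define V as minimal points of S
  set V : Set (Fin K → ℝ) := {x ∈ S | ∀ y ∈ S, y ≤ x → y = x} with hV
  -- upset K V = S
  have hupV : upset K V = S := by
    ext x
    constructor
    · rintro ⟨hxI, y, ⟨hyS, -⟩, hyx⟩
      exact hSup y hyS x hxI hyx
    · intro hx
      obtain ⟨m, hmS, hmx, hmin⟩ := exists_minimal_le hScompact hx
      exact ⟨hSIcc hx, m, ⟨hmS, hmin⟩, hmx⟩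
  have hVmem : memF K V := by
    refine ⟨?_, fun v hv => hSIcc hv.1, fun u hu v hv huv => hv.2 u hu.1 huv, ?_, ?_⟩
    · obtain ⟨x, hx⟩ := hSne
      obtain ⟨m, hmS, hmx, hmin⟩ := exists_minimal_le hScompact hx
      exact ⟨m, hmS, hmin⟩
    · rw [hupV]; exact hSclosed
    · rw [hupV]; exact hSconv
  have hVtend : Filter.Tendsto (fun n => dF K (Vseq n) V) Filter.atTop (nhds 0) := by
    simpa [dF, hupV] using hdist
  refine ⟨V, ⟨hVmem, hVtend⟩, ?_⟩
  rintro W ⟨hWmem, hWtend⟩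
  -- show upsets equal
  have hWfin : ∀ n, EMetric.hausdorffEdist (upset K (Vseq n)) (upset K W) ≠ ⊤ := fun n =>
    Metric.hausdorffEdist_ne_top_of_nonempty_of_bounded (upset_nonempty (hmem n))
      (upset_nonempty hWmem) (upset_bounded _) (upset_bounded _)
  have hVfin : ∀ n, EMetric.hausdorffEdist (upset K (Vseq n)) (upset K V) ≠ ⊤ := fun n =>
    Metric.hausdorffEdist_ne_top_of_nonempty_of_bounded (upset_nonempty (hmem n))
      (upset_nonempty hVmem) (upset_bounded _) (upset_bounded _)
  have hzero : Metric.hausdorffDist (upset K W) (upset K V) = 0 := by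
    have hle : ∀ ε : ℝ, 0 < ε → Metric.hausdorffDist (upset K W) (upset K V) ≤ ε := by
      intro ε hε
      obtain ⟨n, hn1, hn2⟩ :=
        ((hWtend.eventually (gt_mem_nhds (by linarith : (0:ℝ) < ε / 2))).and
          (hVtend.eventually (gt_mem_nhds (by linarith : (0:ℝ) < ε / 2)))).exists
      have h1 : Metric.hausdorffDist (upset K W) (upset K (Vseq n)) < ε / 2 := by
        rw [Metric.hausdorffDist_comm]; simpa [dF] using hn1
      have h2 : Metric.hausdorffDist (upset K (Vseq n)) (upset K V) < ε / 2 := by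
        simpa [dF] using hn2
      calc Metric.hausdorffDist (upset K W) (upset K V)
          ≤ Metric.hausdorffDist (upset K W) (upset K (Vseq n)) +
            Metric.hausdorffDist (upset K (Vseq n)) (upset K V) :=
            Metric.hausdorffDist_triangle (by rw [EMetric.hausdorffEdist_comm]; exact hWfin n)
        _ ≤ ε := by linarith
    have hnn := Metric.hausdorffDist_nonneg (s := upset K W) (t := upset K V)
    by_contra h
    have : 0 < Metric.hausdorffDist (upset K W) (upset K V) := lt_of_le_of_ne hnn (Ne.symm h)
    linarith [hle (Metric.hausdorffDist (upset K W) (upset K V) / 2) (by linarith)]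
  have hWVup : upset K W = upset K V := by
    have hWc : IsClosed (upset K W) := hWmem.2.2.2.1
    have hVc : IsClosed (upset K V) := hVmem.2.2.2.1
    have := (Metric.hausdorffDist_zero_iff_closure_eq_closure
      (Metric.hausdorffEdist_ne_top_of_nonempty_of_bounded (upset_nonempty hWmem)
        (upset_nonempty hVmem) (upset_bounded _) (upset_bounded _))).1 hzero
    rwa [hWc.closure_eq, hVc.closure_eq] at this
  rw [memF_eq_minimal hWmem, memF_eq_minimal hVmem, hWVup]
end

section
/- There exists a unique V* ∈ 𝓕 such that Φ(V*) = V*, and for every V ∈ 𝓕 the sequence (Φ^n(V))_{n∈ℕ} converges to V* in the metric d. -/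
/-- The lower Pareto frontier `Λ(S)`: the minimal elements of `S` in the
coordinatewise order, i.e. the elements of `S` dominating no other element of `S`. -/
def pareto (K : ℕ) (S : Set (Fin K → ℝ)) : Set (Fin K → ℝ) :=
  {x ∈ S | ∀ y ∈ S, y ≤ x → y = x}

/-- The probability simplex over `Fin m`. -/
def simplex (m : ℕ) : Set (Fin m → ℝ) :=
  {α | (∀ a, 0 ≤ α a) ∧ ∑ a, α a = 1}

/-- The one-stage operator `Ψ`. -/
def psi (K m n : ℕ) (hn : 0 < n) (β : ℝ) (r : Fin K → Fin m → Fin n → ℝ)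
    (S : Set (Fin K → ℝ)) : Set (Fin K → ℝ) :=
  {u | ∃ α ∈ simplex m, ∃ R : Fin m → Fin n → Fin K → ℝ,
    (∀ a b, R a b ∈ S) ∧
    ∀ k, u k = Finset.univ.sup'
      (Finset.univ_nonempty_iff.mpr (Fin.pos_iff_nonempty.mp hn))
      (fun b => ∑ a, α a * (r k a b + β * R a b k))}

/-!
Passing to upsets identifies `𝓕` with the nonempty compact convex subsets `C` of the cube
`[0,1]^K` satisfying `up C = C`, and conjugates `Φ` to `C ↦ up (Ψ C)`. On nonempty compact convex
subsets of the cube this map is a `β`-contraction for the Hausdorff metric: moving every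
continuation vector by at most `δ` moves every loss vector by at most `β δ`. These sets form a
closed, hence complete, subspace of the nonempty compacts, so Banach's fixed point theorem gives
a unique fixed point `C*` attracting all orbits, and `V*` is the lower Pareto frontier of `C*`.
-/

open Set Metric TopologicalSpace Function Pointwise

section UpsetPareto

variable {K : ℕ} {A B S : Set (Fin K → ℝ)} {x : Fin K → ℝ}

lemma upset_subset_Icc_s11 : upset K A ⊆ Icc 0 1 := fun _ hx => hx.1

lemma upset_mono (h : A ⊆ B) : upset K A ⊆ upset K B := by
  rintro x ⟨hx, y, hy, hyx⟩
  exact ⟨hx, y, h hy, hyx⟩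

lemma subset_upset_s11 (h : A ⊆ Icc 0 1) : A ⊆ upset K A := fun x hx => ⟨h hx, x, hx, le_rfl⟩

lemma upset_upset : upset K (upset K A) = upset K A := by
  refine Subset.antisymm ?_ (subset_upset_s11 upset_subset_Icc_s11)
  rintro x ⟨hx, y, ⟨-, z, hz, hzy⟩, hyx⟩
  exact ⟨hx, z, hz, hzy.trans hyx⟩

lemma upset_nonempty_s11 (hA : A ⊆ Icc 0 1) (hne : A.Nonempty) : (upset K A).Nonempty :=
  hne.mono (subset_upset_s11 hA)

lemma upset_eq_inter_add : upset K A = Icc 0 1 ∩ (A + Ici (0 : Fin K → ℝ)) := by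
  ext x
  simp only [upset, mem_ofPred_eq, mem_inter_iff, mem_add, mem_Ici]
  refine and_congr_right fun _ => ⟨fun ⟨y, hy, hyx⟩ => ⟨y, hy, x - y, sub_nonneg.2 hyx, by abel⟩,
    fun ⟨y, hy, z, hz, hyz⟩ => ⟨y, hy, hyz ▸ le_add_of_nonneg_right hz⟩⟩

lemma isCompact_upset (hA : IsCompact A) : IsCompact (upset K A) := by
  rw [upset_eq_inter_add]
  exact isCompact_Icc.inter_right (isClosed_Ici.add_left_of_isCompact hA)

lemma pareto_subset : pareto K S ⊆ S := fun _ hx => hx.1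

lemma pareto_eq_self (h : ∀ u ∈ S, ∀ v ∈ S, u ≤ v → u = v) : pareto K S = S :=
  Subset.antisymm pareto_subset fun x hx => ⟨hx, fun y hy hyx => h y hy x hx hyx⟩

lemma pareto_upset (hS : S ⊆ Icc 0 1) : pareto K (upset K S) = pareto K S := by
  ext x
  constructor
  · rintro ⟨⟨-, s, hs, hsx⟩, hmin⟩
    obtain rfl : s = x := hmin s (subset_upset_s11 hS hs) hsx
    exact ⟨hs, fun y hy hyx => hmin y (subset_upset_s11 hS hy) hyx⟩
  · rintro ⟨hx, hmin⟩
    refine ⟨subset_upset_s11 hS hx, ?_⟩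
    rintro y ⟨-, s, hs, hsy⟩ hyx
    obtain rfl : s = x := hmin s hs (hsy.trans hyx)
    exact le_antisymm hyx hsy

/-- A minimiser of `∑ k, y k` over the compact set `S ∩ Iic x` is Pareto minimal in `S`. -/
lemma exists_mem_pareto_le (hS : IsCompact S) (hx : x ∈ S) : ∃ y ∈ pareto K S, y ≤ x := by
  obtain ⟨y, ⟨hyS, hyx⟩, hmin⟩ :=
    (hS.inter_right isClosed_Iic).exists_isMinOn ⟨x, hx, mem_Iic.2 le_rfl⟩
      (continuous_finsetSum _ fun k _ => continuous_apply k).continuousOn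
  refine ⟨y, ⟨hyS, fun z hz hzy => ?_⟩, hyx⟩
  by_contra hne
  obtain ⟨-, k, hk⟩ := Pi.lt_def.1 (lt_of_le_of_ne hzy hne)
  have hlt : ∑ k, z k < ∑ k, y k :=
    Finset.sum_lt_sum (fun k _ => hzy k) ⟨k, Finset.mem_univ k, hk⟩
  exact hlt.not_ge (hmin ⟨hz, hzy.trans hyx⟩)

lemma upset_pareto (hS : IsCompact S) : upset K (pareto K S) = upset K S := by
  refine Subset.antisymm (upset_mono pareto_subset) ?_
  rintro x ⟨hx, s, hs, hsx⟩
  obtain ⟨y, hy, hys⟩ := exists_mem_pareto_le hS hs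
  exact ⟨hx, y, hy, hys.trans hsx⟩

lemma upset_pareto_of_isCompact_upset (hS : S ⊆ Icc 0 1) (hc : IsCompact (upset K S)) :
    upset K (pareto K S) = upset K S := by
  rw [← pareto_upset hS, upset_pareto hc, upset_upset]

lemma memF_pareto (hS : S ⊆ Icc 0 1) (hne : S.Nonempty) (hc : IsCompact (upset K S))
    (hconv : Convex ℝ (upset K S)) : memF K (pareto K S) := by
  have hup := upset_pareto_of_isCompact_upset hS hc
  refine ⟨?_, pareto_subset.trans hS, fun u hu v hv huv => hv.2 u hu.1 huv, ?_, ?_⟩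
  · obtain ⟨x, -, y, hy, -⟩ := hup ▸ upset_nonempty_s11 hS hne
    exact ⟨y, hy⟩
  · exact hup ▸ hc.isClosed
  · exact hup ▸ hconv

lemma memF.pareto_upset {V : Set (Fin K → ℝ)} (hV : memF K V) : pareto K (upset K V) = V := by
  rw [_root_.pareto_upset hV.2.1, pareto_eq_self hV.2.2.1]

end UpsetPareto

section Psi

variable {K m n : ℕ} {hn : 0 < n} {β : ℝ} {r : Fin K → Fin m → Fin n → ℝ}
  {S S' : Set (Fin K → ℝ)} {α α₁ α₂ : Fin m → ℝ} {R R' R₁ R₂ : Fin m → Fin n → Fin K → ℝ}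

variable (hn β r) in
def worstCaseLoss (α : Fin m → ℝ) (R : Fin m → Fin n → Fin K → ℝ) : Fin K → ℝ :=
  fun k => Finset.univ.sup' (Finset.univ_nonempty_iff.mpr (Fin.pos_iff_nonempty.mp hn))
    fun b => ∑ a, α a * (r k a b + β * R a b k)

lemma mem_psi {u : Fin K → ℝ} : u ∈ psi K m n hn β r S ↔
    ∃ α ∈ simplex m, ∃ R, (∀ a b, R a b ∈ S) ∧ worstCaseLoss hn β r α R = u := by
  simp only [psi, worstCaseLoss, mem_ofPred_eq, funext_iff, eq_comm]

lemma worstCaseLoss_le_iff {k : Fin K} {c : ℝ} : worstCaseLoss hn β r α R k ≤ c ↔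
    ∀ b, ∑ a, α a * (r k a b + β * R a b k) ≤ c := by
  simp [worstCaseLoss]

lemma le_worstCaseLoss (k : Fin K) (b : Fin n) :
    ∑ a, α a * (r k a b + β * R a b k) ≤ worstCaseLoss hn β r α R k :=
  Finset.le_sup' (fun b => ∑ a, α a * (r k a b + β * R a b k)) (Finset.mem_univ b)

lemma worstCaseLoss_mem_Icc (hβ0 : 0 ≤ β) (hr : ∀ k a b, r k a b ∈ Icc 0 (1 - β))
    (hα : α ∈ simplex m) (hR : ∀ a b, R a b ∈ Icc 0 1) : worstCaseLoss hn β r α R ∈ Icc 0 1 := by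
  have hterm : ∀ k a b, r k a b + β * R a b k ∈ Icc (0 : ℝ) 1 := fun k a b => by
    have := (hR a b).1 k; have := (hR a b).2 k; have := hr k a b
    simp only [mem_Icc, Pi.zero_apply, Pi.one_apply] at *
    constructor <;> nlinarith
  refine ⟨fun k => (Finset.sum_nonneg fun a _ => mul_nonneg (hα.1 a) (hterm k a _).1).trans
    (le_worstCaseLoss k ⟨0, hn⟩), fun k => worstCaseLoss_le_iff.2 fun b => ?_⟩
  calc ∑ a, α a * (r k a b + β * R a b k) ≤ ∑ a, α a :=
        Finset.sum_le_sum fun a _ => mul_le_of_le_one_right (hα.1 a) (hterm k a b).2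
    _ = 1 := hα.2

lemma worstCaseLoss_mono (hβ0 : 0 ≤ β) (hα : 0 ≤ α) (h : R ≤ R') :
    worstCaseLoss hn β r α R ≤ worstCaseLoss hn β r α R' := fun k =>
  Finset.sup'_mono_fun fun b _ => Finset.sum_le_sum fun a _ =>
    mul_le_mul_of_nonneg_left (by gcongr; exact h a b k) (hα a)

lemma worstCaseLoss_le_add {δ : ℝ} (hβ0 : 0 ≤ β) (hα : α ∈ simplex m)
    (h : ∀ a b, dist (R a b) (R' a b) ≤ δ) (k : Fin K) :
    worstCaseLoss hn β r α R k ≤ worstCaseLoss hn β r α R' k + β * δ := by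
  refine worstCaseLoss_le_iff.2 fun b => ?_
  have hR : ∀ a, R a b k ≤ R' a b k + δ := fun a => by
    have := (le_abs_self _).trans ((dist_le_pi_dist (R a b) (R' a b) k).trans (h a b))
    linarith
  calc ∑ a, α a * (r k a b + β * R a b k)
      ≤ ∑ a, (α a * (r k a b + β * R' a b k) + α a * (β * δ)) :=
        Finset.sum_le_sum fun a _ => by
          have := mul_le_mul_of_nonneg_left (hR a) hβ0
          rw [← mul_add]
          exact mul_le_mul_of_nonneg_left (by linarith) (hα.1 a)
    _ = ∑ a, α a * (r k a b + β * R' a b k) + β * δ := by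
        rw [Finset.sum_add_distrib, ← Finset.sum_mul, hα.2, one_mul]
    _ ≤ worstCaseLoss hn β r α R' k + β * δ := by gcongr; exact le_worstCaseLoss k b

/-- The loss is linear in the weighted continuations `α a • R a b`, and `Convex.add_smul` lets
us mix these inside `S`. -/
lemma exists_worstCaseLoss_add_le (hS : Convex ℝ S) (hα₁ : 0 ≤ α₁) (hα₂ : 0 ≤ α₂)
    (hR₁ : ∀ a b, R₁ a b ∈ S) (hR₂ : ∀ a b, R₂ a b ∈ S) {c₁ c₂ : ℝ} (hc₁ : 0 ≤ c₁)
    (hc₂ : 0 ≤ c₂) : ∃ R, (∀ a b, R a b ∈ S) ∧ worstCaseLoss hn β r (c₁ • α₁ + c₂ • α₂) R ≤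
      c₁ • worstCaseLoss hn β r α₁ R₁ + c₂ • worstCaseLoss hn β r α₂ R₂ := by
  have hmix : ∀ a b, ∃ s ∈ S, (c₁ * α₁ a + c₂ * α₂ a) • s =
      (c₁ * α₁ a) • R₁ a b + (c₂ * α₂ a) • R₂ a b := fun a b => by
    have hmem : (c₁ * α₁ a) • R₁ a b + (c₂ * α₂ a) • R₂ a b ∈ (c₁ * α₁ a + c₂ * α₂ a) • S := by
      rw [hS.add_smul (mul_nonneg hc₁ (hα₁ a)) (mul_nonneg hc₂ (hα₂ a))]
      exact add_mem_add (smul_mem_smul_set (hR₁ a b)) (smul_mem_smul_set (hR₂ a b))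
    exact mem_smul_set.1 hmem
  choose R hRS hR using hmix
  refine ⟨R, hRS, fun k => worstCaseLoss_le_iff.2 fun b => ?_⟩
  have hterm : ∀ a, (c₁ * α₁ a + c₂ * α₂ a) * (r k a b + β * R a b k) =
      c₁ * (α₁ a * (r k a b + β * R₁ a b k)) + c₂ * (α₂ a * (r k a b + β * R₂ a b k)) := by
    intro a
    have := congrFun (hR a b) k
    simp only [Pi.add_apply, Pi.smul_apply, smul_eq_mul] at this
    linear_combination β * this
  calc ∑ a, (c₁ * α₁ a + c₂ * α₂ a) * (r k a b + β * R a b k)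
      = c₁ * ∑ a, α₁ a * (r k a b + β * R₁ a b k) + c₂ * ∑ a, α₂ a * (r k a b + β * R₂ a b k) := by
        rw [Finset.mul_sum, Finset.mul_sum, ← Finset.sum_add_distrib]
        exact Finset.sum_congr rfl fun a _ => hterm a
    _ ≤ c₁ * worstCaseLoss hn β r α₁ R₁ k + c₂ * worstCaseLoss hn β r α₂ R₂ k := by
        gcongr <;> exact le_worstCaseLoss k b

lemma psi_mono (h : S ⊆ S') : psi K m n hn β r S ⊆ psi K m n hn β r S' := by
  rintro u ⟨α, hα, R, hR, hu⟩
  exact ⟨α, hα, R, fun a b => h (hR a b), hu⟩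

lemma psi_subset_Icc (hβ0 : 0 ≤ β) (hr : ∀ k a b, r k a b ∈ Icc 0 (1 - β))
    (hS : S ⊆ Icc 0 1) : psi K m n hn β r S ⊆ Icc 0 1 := by
  intro u hu
  obtain ⟨α, hα, R, hR, rfl⟩ := mem_psi.1 hu
  exact worstCaseLoss_mem_Icc hβ0 hr hα fun a b => hS (hR a b)

lemma psi_nonempty (hm : 0 < m) (hS : S.Nonempty) : (psi K m n hn β r S).Nonempty := by
  obtain ⟨s, hs⟩ := hS
  exact ⟨_, mem_psi.2 ⟨_, single_mem_stdSimplex ℝ ⟨0, hm⟩, fun _ _ => s, fun _ _ => hs, rfl⟩⟩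

lemma isCompact_psi (hS : IsCompact S) : IsCompact (psi K m n hn β r S) := by
  have himage : psi K m n hn β r S = (fun p => worstCaseLoss hn β r p.1 p.2) ''
      (simplex m ×ˢ {R | ∀ a b, R a b ∈ S}) := by
    ext u
    simp only [mem_psi, mem_image, mem_prod, Prod.exists, mem_ofPred_eq]
    tauto
  have hR : IsCompact {R : Fin m → Fin n → Fin K → ℝ | ∀ a b, R a b ∈ S} := by
    simpa only [Set.pi, mem_univ, true_imp_iff, mem_ofPred_eq] using
      isCompact_univ_pi fun _ : Fin m => isCompact_univ_pi fun _ : Fin n => hS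
  rw [himage]
  refine ((isCompact_stdSimplex ℝ (Fin m)).prod hR).image ?_
  refine continuous_pi fun k => Continuous.finset_sup'_apply _ fun b _ => ?_
  fun_prop

lemma upset_psi_upset (hβ0 : 0 ≤ β) (hS : S ⊆ Icc 0 1) :
    upset K (psi K m n hn β r (upset K S)) = upset K (psi K m n hn β r S) := by
  refine Subset.antisymm ?_ (upset_mono (psi_mono (subset_upset_s11 hS)))
  rintro x ⟨hx, u, hu, hux⟩
  obtain ⟨α, hα, R', hR', rfl⟩ := mem_psi.1 hu
  choose R hRS hRR' using fun a b => (hR' a b).2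
  exact ⟨hx, _, mem_psi.2 ⟨α, hα, R, hRS, rfl⟩, (worstCaseLoss_mono hβ0 hα.1 hRR').trans hux⟩

lemma convex_upset_psi (hS : Convex ℝ S) : Convex ℝ (upset K (psi K m n hn β r S)) := by
  rintro x₁ ⟨hx₁, u₁, hu₁, hux₁⟩ x₂ ⟨hx₂, u₂, hu₂, hux₂⟩ c₁ c₂ hc₁ hc₂ hc
  obtain ⟨α₁, hα₁, R₁, hR₁, rfl⟩ := mem_psi.1 hu₁
  obtain ⟨α₂, hα₂, R₂, hR₂, rfl⟩ := mem_psi.1 hu₂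
  obtain ⟨R, hRS, hle⟩ := exists_worstCaseLoss_add_le (hn := hn) (β := β) (r := r) hS hα₁.1 hα₂.1
    hR₁ hR₂ hc₁ hc₂
  have hα : c₁ • α₁ + c₂ • α₂ ∈ simplex m := convex_stdSimplex ℝ (Fin m) hα₁ hα₂ hc₁ hc₂ hc
  exact ⟨convex_Icc 0 1 hx₁ hx₂ hc₁ hc₂ hc, _, mem_psi.2 ⟨_, hα, R, hRS, rfl⟩,
    hle.trans (add_le_add (smul_le_smul_of_nonneg_left hux₁ hc₁)
      (smul_le_smul_of_nonneg_left hux₂ hc₂))⟩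

/-- Replacing each continuation vector by a `δ`-close one moves the loss `u ≤ x` to some `u'`
with `u' ≤ u + β δ`; then `y = x ⊔ u'` works. -/
lemma exists_dist_le_of_mem_upset_psi (hβ0 : 0 ≤ β) (hr : ∀ k a b, r k a b ∈ Icc 0 (1 - β))
    (hS' : S' ⊆ Icc 0 1) {δ : ℝ} (hδ0 : 0 ≤ δ) (hδ : ∀ s ∈ S, ∃ s' ∈ S', dist s s' ≤ δ) :
    ∀ x ∈ upset K (psi K m n hn β r S), ∃ y ∈ upset K (psi K m n hn β r S'),
      dist x y ≤ β * δ := by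
  rintro x ⟨hx, u, hu, hux⟩
  obtain ⟨α, hα, R, hR, rfl⟩ := mem_psi.1 hu
  choose R' hR'S' hRR' using fun a b => hδ (R a b) (hR a b)
  have hu' : worstCaseLoss hn β r α R' ∈ Icc 0 1 :=
    worstCaseLoss_mem_Icc hβ0 hr hα fun a b => hS' (hR'S' a b)
  refine ⟨x ⊔ worstCaseLoss hn β r α R', ⟨⟨hx.1.trans le_sup_left, sup_le hx.2 hu'.2⟩, _,
    mem_psi.2 ⟨α, hα, R', hR'S', rfl⟩, le_sup_right⟩, ?_⟩
  refine (dist_pi_le_iff (mul_nonneg hβ0 hδ0)).2 fun k => ?_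
  have hk := worstCaseLoss_le_add (hn := hn) (r := r) hβ0 hα
    (fun a b => (dist_comm (R' a b) (R a b)).trans_le (hRR' a b)) k
  have hxk := hux k
  rw [Real.dist_eq, Pi.sup_apply, abs_le]
  constructor <;> cases max_cases (x k) (worstCaseLoss hn β r α R' k) <;>
    nlinarith [mul_nonneg hβ0 hδ0]

lemma hausdorffDist_upset_psi_le (hβ0 : 0 ≤ β) (hr : ∀ k a b, r k a b ∈ Icc 0 (1 - β))
    (hS : S ⊆ Icc 0 1) (hS' : S' ⊆ Icc 0 1) {δ : ℝ} (hδ0 : 0 ≤ δ)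
    (h₁ : ∀ s ∈ S, ∃ s' ∈ S', dist s s' ≤ δ) (h₂ : ∀ s' ∈ S', ∃ s ∈ S, dist s' s ≤ δ) :
    hausdorffDist (upset K (psi K m n hn β r S)) (upset K (psi K m n hn β r S')) ≤ β * δ :=
  hausdorffDist_le_of_mem_dist (mul_nonneg hβ0 hδ0)
    (exists_dist_le_of_mem_upset_psi hβ0 hr hS' hδ0 h₁)
    (exists_dist_le_of_mem_upset_psi hβ0 hr hS hδ0 h₂)

end Psi

lemma TopologicalSpace.NonemptyCompacts.exists_dist_le_dist {α : Type*} [MetricSpace α]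
    {C D : NonemptyCompacts α} {x : α} (hx : x ∈ C) : ∃ y ∈ D, dist x y ≤ dist C D := by
  obtain ⟨y, hy, hxy⟩ := D.isCompact.exists_infDist_eq_dist D.nonempty x
  refine ⟨y, hy, hxy ▸ infDist_le_hausdorffDist_of_mem hx ?_⟩
  exact hausdorffEDist_ne_top_of_nonempty_of_bounded C.nonempty D.nonempty
    C.isCompact.isBounded D.isCompact.isBounded

lemma TopologicalSpace.NonemptyCompacts.isClosed_setOf_convex {E : Type*}
    [NormedAddCommGroup E] [NormedSpace ℝ E] :
    IsClosed {C : NonemptyCompacts E | Convex ℝ (C : Set E)} := by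
  refine isClosed_of_closure_subset fun C hC x hx y hy a b ha hb hab => ?_
  rw [← C.isCompact.isClosed.closure_eq, Metric.mem_closure_iff]
  intro ε hε
  obtain ⟨D, hD, hCD⟩ := Metric.mem_closure_iff.1 hC (ε / 2) (half_pos hε)
  obtain ⟨x', hx', hxx'⟩ := exists_dist_le_dist (D := D) hx
  obtain ⟨y', hy', hyy'⟩ := exists_dist_le_dist (D := D) hy
  obtain ⟨z, hz, hz'z⟩ := exists_dist_le_dist (D := C) (hD hx' hy' ha hb hab)
  have hcombo : dist (a • x + b • y) (a • x' + b • y') ≤ dist C D := calc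
    _ ≤ dist (a • x) (a • x') + dist (b • y) (b • y') := dist_add_add_le _ _ _ _
    _ = a * dist x x' + b * dist y y' := by
      rw [dist_smul₀, dist_smul₀, Real.norm_of_nonneg ha, Real.norm_of_nonneg hb]
    _ ≤ a * dist C D + b * dist C D := by gcongr
    _ = dist C D := by rw [← add_mul, hab, one_mul]
  refine ⟨z, hz, (dist_triangle _ (a • x' + b • y') z).trans_lt ?_⟩
  rw [dist_comm D C] at hz'z
  linarith

def cubeConvexCompacts (K : ℕ) : Set (NonemptyCompacts (Fin K → ℝ)) :=
  {C | (C : Set (Fin K → ℝ)) ⊆ Icc 0 1 ∧ Convex ℝ (C : Set (Fin K → ℝ))}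

instance (K : ℕ) : CompleteSpace (cubeConvexCompacts K) :=
  ((NonemptyCompacts.isClosed_subsets_of_isClosed isClosed_Icc).inter
    NonemptyCompacts.isClosed_setOf_convex).completeSpace_coe

instance (K : ℕ) : Nonempty (cubeConvexCompacts K) :=
  ⟨⟨⟨⟨Icc 0 1, isCompact_Icc⟩, nonempty_Icc.2 zero_le_one⟩, subset_rfl, convex_Icc 0 1⟩⟩

lemma memF.isCompact_upset {K : ℕ} {V : Set (Fin K → ℝ)} (hV : memF K V) :
    IsCompact (upset K V) :=
  isCompact_Icc.of_isClosed_subset hV.2.2.2.1 upset_subset_Icc_s11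

def memF.toCubeConvexCompacts {K : ℕ} {V : Set (Fin K → ℝ)} (hV : memF K V) :
    cubeConvexCompacts K :=
  ⟨⟨⟨upset K V, hV.isCompact_upset⟩, upset_nonempty_s11 hV.2.1 hV.1⟩, upset_subset_Icc_s11, hV.2.2.2.2⟩

lemma memF.dF_eq_dist {K : ℕ} {V W : Set (Fin K → ℝ)} (hV : memF K V) (hW : memF K W) :
    dF K V W = dist hV.toCubeConvexCompacts hW.toCubeConvexCompacts := rfl

lemma memF.eq_of_toCubeConvexCompacts_eq {K : ℕ} {V W : Set (Fin K → ℝ)} (hV : memF K V)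
    (hW : memF K W) (h : hV.toCubeConvexCompacts = hW.toCubeConvexCompacts) : V = W := by
  have hup : upset K V = upset K W := congrArg
    (fun C : cubeConvexCompacts K => ((C : NonemptyCompacts (Fin K → ℝ)) : Set (Fin K → ℝ))) h
  rw [← hV.pareto_upset, hup, hW.pareto_upset]

def phi {K m n : ℕ} (hn : 0 < n) (β : ℝ) (r : Fin K → Fin m → Fin n → ℝ)
    (S : Set (Fin K → ℝ)) : Set (Fin K → ℝ) :=
  pareto K (psi K m n hn β r S)

lemma memF_phi {K m n : ℕ} {β : ℝ} {r : Fin K → Fin m → Fin n → ℝ} {V : Set (Fin K → ℝ)}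
    (hn : 0 < n) (hm : 0 < m) (hβ0 : 0 ≤ β) (hr : ∀ k a b, r k a b ∈ Icc 0 (1 - β))
    (hV : memF K V) : memF K (phi hn β r V) := by
  have hup := upset_psi_upset (hn := hn) (r := r) hβ0 hV.2.1
  exact memF_pareto (psi_subset_Icc hβ0 hr hV.2.1) (psi_nonempty hm hV.1)
    (hup ▸ isCompact_upset (isCompact_psi hV.isCompact_upset))
    (hup ▸ convex_upset_psi hV.2.2.2.2)

section UpsetPsi

variable {K m n : ℕ} {β : ℝ} {r : Fin K → Fin m → Fin n → ℝ} {V : Set (Fin K → ℝ)}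

variable (hn : 0 < n) (hm : 0 < m) (hβ0 : 0 ≤ β) (hr : ∀ k a b, r k a b ∈ Icc 0 (1 - β))

def upsetPsi (C : cubeConvexCompacts K) : cubeConvexCompacts K :=
  ⟨⟨⟨upset K (psi K m n hn β r C), isCompact_upset (isCompact_psi C.1.isCompact)⟩,
    upset_nonempty_s11 (psi_subset_Icc hβ0 hr C.2.1) (psi_nonempty hm C.1.nonempty)⟩,
    upset_subset_Icc_s11, convex_upset_psi C.2.2⟩

lemma contractingWith_upsetPsi (hβ1 : β < 1) :
    ContractingWith ⟨β, hβ0⟩ (upsetPsi hn hm hβ0 hr) := by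
  refine ⟨by exact_mod_cast hβ1, LipschitzWith.of_dist_le_mul fun C D => ?_⟩
  exact hausdorffDist_upset_psi_le hβ0 hr C.2.1 D.2.1 dist_nonneg
    (fun _ hs => NonemptyCompacts.exists_dist_le_dist hs)
    (fun _ hs => dist_comm C D ▸ NonemptyCompacts.exists_dist_le_dist hs)

lemma toCubeConvexCompacts_phi (hV : memF K V) :
    (memF_phi hn hm hβ0 hr hV).toCubeConvexCompacts =
      upsetPsi hn hm hβ0 hr hV.toCubeConvexCompacts := by
  refine Subtype.ext (NonemptyCompacts.ext ?_)
  show upset K (pareto K (psi K m n hn β r V)) = upset K (psi K m n hn β r (upset K V))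
  rw [upset_pareto_of_isCompact_upset (psi_subset_Icc hβ0 hr hV.2.1)
    (upset_psi_upset hβ0 hV.2.1 ▸ isCompact_upset (isCompact_psi hV.isCompact_upset)),
    upset_psi_upset hβ0 hV.2.1]

lemma isFixedPt_upsetPsi (hV : memF K V) (hfix : phi hn β r V = V) :
    IsFixedPt (upsetPsi hn hm hβ0 hr) hV.toCubeConvexCompacts :=
  (toCubeConvexCompacts_phi hn hm hβ0 hr hV).symm.trans
    (Subtype.ext (NonemptyCompacts.ext (congrArg (upset K) hfix)))

lemma upset_eq_self_of_isFixedPt {C : cubeConvexCompacts K}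
    (hC : IsFixedPt (upsetPsi hn hm hβ0 hr) C) : upset K C = C := by
  rw [← hC]
  exact upset_upset

lemma exists_memF_iterate_phi (hV : memF K V) (j : ℕ) :
    ∃ hj : memF K ((phi hn β r)^[j] V),
      hj.toCubeConvexCompacts = (upsetPsi hn hm hβ0 hr)^[j] hV.toCubeConvexCompacts := by
  induction j with
  | zero => exact ⟨hV, rfl⟩
  | succ j ih =>
    obtain ⟨hj, hjC⟩ := ih
    rw [iterate_succ_apply', iterate_succ_apply', ← hjC]
    exact ⟨memF_phi hn hm hβ0 hr hj, toCubeConvexCompacts_phi hn hm hβ0 hr hj⟩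

end UpsetPsi

theorem phi_fixed_point_general {K m n : ℕ} (hm : 0 < m) (hn : 0 < n)
    (β : ℝ) (hβ : β ∈ Set.Ico (0:ℝ) 1)
    (r : Fin K → Fin m → Fin n → ℝ) (hr : ∀ k a b, r k a b ∈ Set.Icc (0:ℝ) (1 - β)) :
    ∃ Vstar : Set (Fin K → ℝ), memF K Vstar ∧
      pareto K (psi K m n hn β r Vstar) = Vstar ∧
      (∀ W : Set (Fin K → ℝ), memF K W → pareto K (psi K m n hn β r W) = W → W = Vstar) ∧
      ∀ V : Set (Fin K → ℝ), memF K V →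
        Filter.Tendsto
          (fun j => dF K ((fun S => pareto K (psi K m n hn β r S))^[j] V) Vstar)
          Filter.atTop (nhds 0) := by
  have hT := contractingWith_upsetPsi hn hm hβ.1 hr hβ.2
  set C := hT.fixedPoint
  have hC : upset K C = C := upset_eq_self_of_isFixedPt hn hm hβ.1 hr hT.fixedPoint_isFixedPt
  have hVstar : memF K (pareto K C) :=
    memF_pareto C.2.1 C.1.nonempty (by rw [hC]; exact C.1.isCompact) (by rw [hC]; exact C.2.2)
  have hVC : hVstar.toCubeConvexCompacts = C :=
    Subtype.ext (NonemptyCompacts.ext ((upset_pareto C.1.isCompact).trans hC))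
  refine ⟨pareto K C, hVstar, ?_, fun W hW hWfix => ?_, fun V hV => ?_⟩
  · refine (memF_phi hn hm hβ.1 hr hVstar).eq_of_toCubeConvexCompacts_eq hVstar ?_
    rw [toCubeConvexCompacts_phi hn hm hβ.1 hr hVstar, hVC]
    exact hT.fixedPoint_isFixedPt
  · refine hW.eq_of_toCubeConvexCompacts_eq hVstar ?_
    rw [hVC]
    exact hT.fixedPoint_unique (isFixedPt_upsetPsi hn hm hβ.1 hr hW hWfix)
  · refine (tendsto_iff_dist_tendsto_zero.1
      (hT.tendsto_iterate_fixedPoint hV.toCubeConvexCompacts)).congr fun j => ?_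
    obtain ⟨hj, hjC⟩ := exists_memF_iterate_phi hn hm hβ.1 hr hV j
    have hdist := hj.dF_eq_dist hVstar
    rw [hjC, hVC] at hdist
    exact hdist.symm

/-- `Φ` has a unique fixed point `V*` in `𝓕`, and for every `V ∈ 𝓕`
the iterates `Φ^n(V)` converge to `V*` in the metric `d`. -/
theorem phi_fixed_point {K m n : ℕ} (hK : 0 < K) (hm : 0 < m) (hn : 0 < n)
    (β : ℝ) (hβ : β ∈ Set.Ico (0:ℝ) 1)
    (r : Fin K → Fin m → Fin n → ℝ) (hr : ∀ k a b, r k a b ∈ Set.Icc (0:ℝ) (1 - β)) :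
    ∃ Vstar : Set (Fin K → ℝ), memF K Vstar ∧
      pareto K (psi K m n hn β r Vstar) = Vstar ∧
      (∀ W : Set (Fin K → ℝ), memF K W → pareto K (psi K m n hn β r W) = W → W = Vstar) ∧
      ∀ V : Set (Fin K → ℝ), memF K V →
        Filter.Tendsto
          (fun j => dF K ((fun S => pareto K (psi K m n hn β r S))^[j] V) Vstar)
          Filter.atTop (nhds 0) :=
  phi_fixed_point_general hm hn β hβ r hr
end
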